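/- arXiv:2002.07978 — 2 statements merged into one kernel-verified Lean document; each statement's English description precedes it below -/
import Mathlib

section
/- (Reflection principle for lightlike lines, analytic form.) Let σ < 0 < τ be real numbers, a, b ∈ ℝ³, and let X̂ : ℝ → ℝ³ be a bounded measurable map with X̂ = a almost everywhere on (σ,0) and X̂ = b almost everywhere on (0,τ). Let X : ℍ → ℝ³ be the componentwise Poisson integral X(ζ) = P_{X̂}(ζ). Then there exists a map F : ℝ × (0,π) → ℝ³, real analytic on the open set ℝ × (0,π) ⊂ ℝ², such that: (i) F(r,θ) = X(r·e^{iθ}) for all r > 0 and θ ∈ (0,π); (ii) F(−r, π−θ) + F(r,θ) = a + b for all r ∈ ℝ and θ ∈ (0,π) (point symmetry with respect to the midpoint (a+b)/2); and (iii) F(0,θ) = (θ/π)·a + (1 − θ/π)·b for all θ ∈ (0,π). -/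
/-!
Let `g` be a component of `X̂`, equal to `α` on `(σ, 0)` and to `β` on `(0, τ)`. Over an interval
the Poisson kernel integrates to an angle,
`∫_u^v y / ((x - s)² + y²) ds = arg (z - v) - arg (z - u)`,
and on the rest of the line it is the imaginary part of the Nevanlinna kernel
`1 / (s - z) - s / (s² + 1)`, which is `O(s⁻²)`, so its integral against `g` is holomorphic off
`(-∞, σ] ∪ [τ, ∞)`. Hence `π P_g(z) = (α - β) arg z + π β + Im Ψ(z)` on the upper half plane, where
`Ψ(z) = β log (τ - z) - α log (z - σ) + ∫_{s ∉ (σ, τ)} (1 / (s - z) - s / (s² + 1)) g(s) ds`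
is holomorphic across `(σ, τ)`. As `arg (r e^{iθ}) = θ` for `r > 0`,
`F(r, θ) = β + (θ (α - β) + Im Ψ(r e^{iθ})) / π` is an analytic extension to all `r ∈ ℝ`.
Since `(-r) e^{i(π - θ)}` is the conjugate of `r e^{iθ}` and `Ψ(z̄) = conj Ψ(z)`, the terms
`Im Ψ` cancel in `F(-r, π - θ) + F(r, θ)`; at `r = 0` the same identity gives `Im Ψ(0) = 0`.
-/

/-- The Poisson integral for the upper half plane. -/
noncomputable def poisson (U : ℝ → ℝ) (ζ : ℂ) : ℝ :=
  (1 / Real.pi) * ∫ s : ℝ, (ζ.im / ((ζ.re - s) ^ 2 + ζ.im ^ 2)) * U s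

open Complex ComplexConjugate MeasureTheory Set Filter
open scoped Real

noncomputable def halfPlanePoissonKernel (z : ℂ) (s : ℝ) : ℝ :=
  z.im / ((z.re - s) ^ 2 + z.im ^ 2)

lemma poisson_eq (U : ℝ → ℝ) (z : ℂ) :
    poisson U z = (∫ s, halfPlanePoissonKernel z s * U s) / π := by
  rw [poisson, one_div, inv_mul_eq_div]
  rfl

lemma im_inv_ofReal_sub (z : ℂ) (s : ℝ) :
    ((s : ℂ) - z)⁻¹.im = halfPlanePoissonKernel z s := by
  rw [inv_im, normSq_apply, halfPlanePoissonKernel]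
  simp only [sub_re, sub_im, ofReal_re, ofReal_im]
  ring

lemma continuous_halfPlanePoissonKernel {z : ℂ} (hz : 0 < z.im) :
    Continuous (halfPlanePoissonKernel z) :=
  continuous_const.div (by fun_prop) fun s => by positivity

lemma hasDerivAt_arg_sub {z : ℂ} (hz : 0 < z.im) (s : ℝ) :
    HasDerivAt (fun t : ℝ => arg (z - t)) (halfPlanePoissonKernel z s) s := by
  have hslit : z - s ∈ slitPlane := mem_slitPlane_iff.2 (Or.inr (by simpa using hz.ne'))
  have h := imCLM.hasFDerivAt.comp_hasDerivAt s
    (((hasDerivAt_id (s : ℝ)).ofReal_comp.const_sub z).clog_real hslit)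
  have hderiv : -((1 : ℝ) : ℂ) / (z - s) = ((s : ℂ) - z)⁻¹ := by
    rw [ofReal_one, neg_div, ← neg_sub, div_neg, neg_neg, one_div]
  simpa only [Function.comp_def, imCLM_apply, log_im, id, hderiv, im_inv_ofReal_sub] using h

lemma integral_Ioo_halfPlanePoissonKernel {z : ℂ} (hz : 0 < z.im) {u v : ℝ} (huv : u ≤ v) :
    ∫ s in Ioo u v, halfPlanePoissonKernel z s = arg (z - v) - arg (z - u) := by
  rw [← integral_Ioc_eq_integral_Ioo, ← intervalIntegral.integral_of_le huv]
  exact intervalIntegral.integral_eq_sub_of_hasDerivAt (fun s _ => hasDerivAt_arg_sub hz s)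
    ((continuous_halfPlanePoissonKernel hz).intervalIntegrable u v)

lemma setIntegral_halfPlanePoissonKernel_mul_of_ae_eq {z : ℂ} (hz : 0 < z.im) {u v c : ℝ}
    (huv : u ≤ v) {g : ℝ → ℝ} (hc : ∀ᵐ s ∂(volume.restrict (Ioo u v)), g s = c) :
    ∫ s in Ioo u v, halfPlanePoissonKernel z s * g s = c * (arg (z - v) - arg (z - u)) := by
  rw [integral_congr_ae (hc.mono fun s hs => by rw [hs]), integral_mul_const,
    integral_Ioo_halfPlanePoissonKernel hz huv, mul_comm]

noncomputable def nevanlinnaKernel (z : ℂ) (s : ℝ) : ℂ := ((s : ℂ) - z)⁻¹ - s / (s ^ 2 + 1)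

lemma im_nevanlinnaKernel_mul_ofReal (z : ℂ) (s x : ℝ) :
    (nevanlinnaKernel z s * x).im = halfPlanePoissonKernel z s * x := by
  rw [nevanlinnaKernel, ← im_inv_ofReal_sub, mul_comm, im_ofReal_mul,
    show (s : ℂ) / (s ^ 2 + 1) = ((s / (s ^ 2 + 1) : ℝ) : ℂ) by push_cast; rfl,
    sub_im, ofReal_im, sub_zero, mul_comm]

lemma conj_nevanlinnaKernel (z : ℂ) (s : ℝ) :
    conj (nevanlinnaKernel z s) = nevanlinnaKernel (conj z) s := by
  simp only [nevanlinnaKernel, map_sub, map_inv₀, map_div₀, map_add, map_pow, map_one,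
    conj_ofReal]

lemma norm_ofReal_sub_I_sq (s : ℝ) : ‖(s : ℂ) - I‖ ^ 2 = 1 + s ^ 2 := by
  rw [← normSq_eq_norm_sq, normSq_apply]
  simp only [sub_re, sub_im, ofReal_re, ofReal_im, I_re, I_im]
  ring

/-- All kernel bounds come from comparing `‖s - z‖` with `‖s - I‖ = √(1 + s ^ 2)`. -/
lemma norm_ofReal_sub_I_le {z : ℂ} {s K : ℝ} (hK : ‖z - I‖ ≤ K * ‖(s : ℂ) - z‖) :
    ‖(s : ℂ) - I‖ ≤ (1 + K) * ‖(s : ℂ) - z‖ := by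
  calc ‖(s : ℂ) - I‖ ≤ ‖(s : ℂ) - z‖ + ‖z - I‖ := norm_sub_le_norm_sub_add_norm_sub _ _ _
    _ ≤ (1 + K) * ‖(s : ℂ) - z‖ := by linarith

lemma ofReal_sub_I_ne_zero (s : ℝ) : (s : ℂ) - I ≠ 0 := fun h => by
  simpa using congrArg im h

lemma norm_ofReal_sq_add_one (s : ℝ) : ‖(s : ℂ) ^ 2 + 1‖ = 1 + s ^ 2 := by
  rw [show (s : ℂ) ^ 2 + 1 = ((1 + s ^ 2 : ℝ) : ℂ) by push_cast; ring, norm_real,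
    Real.norm_of_nonneg (by positivity)]

lemma norm_ofReal_sub_pos {z : ℂ} {s K : ℝ} (hK : ‖z - I‖ ≤ K * ‖(s : ℂ) - z‖) :
    0 < ‖(s : ℂ) - z‖ := by
  have hI := norm_ofReal_sub_I_le hK
  by_contra! h
  rw [le_antisymm h (norm_nonneg _), mul_zero] at hI
  exact ofReal_sub_I_ne_zero s (norm_le_zero_iff.1 hI)

lemma nevanlinnaKernel_eq (z : ℂ) (s : ℝ) (hs : (s : ℂ) ≠ z) :
    nevanlinnaKernel z s = (z - I) / (((s : ℂ) - z) * ((s : ℂ) - I)) + I / (s ^ 2 + 1) := by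
  have h1 : (s : ℂ) - z ≠ 0 := sub_ne_zero.2 hs
  have h2 := ofReal_sub_I_ne_zero s
  have h3 : (s : ℂ) ^ 2 + 1 = ((s : ℂ) - I) * ((s : ℂ) + I) := by ring_nf; rw [I_sq]; ring
  have h4 : (s : ℂ) + I ≠ 0 := fun h => by simpa using congrArg im h
  rw [nevanlinnaKernel, h3]
  field_simp
  ring

lemma norm_nevanlinnaKernel_mul_le {z : ℂ} {s K : ℝ} (hK : ‖z - I‖ ≤ K * ‖(s : ℂ) - z‖) :
    ‖nevanlinnaKernel z s‖ * (1 + s ^ 2) ≤ ‖z - I‖ * (1 + K) + 1 := by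
  have hz := norm_ofReal_sub_pos hK
  rw [nevanlinnaKernel_eq z s (sub_ne_zero.1 (norm_pos_iff.1 hz))]
  have hB := norm_ofReal_sub_I_sq s
  calc _ ≤ (‖z - I‖ / (‖(s : ℂ) - z‖ * ‖(s : ℂ) - I‖) + 1 / (1 + s ^ 2)) * (1 + s ^ 2) := by
        gcongr
        refine (norm_add_le _ _).trans_eq ?_
        rw [norm_div, norm_div, norm_mul, norm_I, norm_ofReal_sq_add_one]
    _ = ‖z - I‖ * (‖(s : ℂ) - I‖ / ‖(s : ℂ) - z‖) + 1 := by
        have := ofReal_sub_I_ne_zero s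
        rw [← hB]; field_simp
    _ ≤ ‖z - I‖ * (1 + K) + 1 := by
        gcongr
        rw [div_le_iff₀ hz]
        linarith [norm_ofReal_sub_I_le hK]

lemma norm_inv_sq_mul_le {z : ℂ} {s K : ℝ} (hK : ‖z - I‖ ≤ K * ‖(s : ℂ) - z‖) :
    ‖(((s : ℂ) - z) ^ 2)⁻¹‖ * (1 + s ^ 2) ≤ (1 + K) ^ 2 := by
  have hz := norm_ofReal_sub_pos hK
  rw [← norm_ofReal_sub_I_sq, norm_inv, norm_pow, inv_mul_eq_div, div_le_iff₀ (by positivity),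
    ← mul_pow]
  gcongr
  exact norm_ofReal_sub_I_le hK

lemma measurable_nevanlinnaKernel (z : ℂ) : Measurable (nevanlinnaKernel z) := by
  unfold nevanlinnaKernel; fun_prop

lemma hasDerivAt_nevanlinnaKernel {z : ℂ} {s : ℝ} (hs : (s : ℂ) ≠ z) :
    HasDerivAt (fun w => nevanlinnaKernel w s) (((s : ℂ) - z) ^ 2)⁻¹ z := by
  have h := (((hasDerivAt_id z).const_sub (s : ℂ)).inv (sub_ne_zero.2 hs)).sub_const
    ((s : ℂ) / (s ^ 2 + 1))
  simpa [nevanlinnaKernel] using h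

lemma norm_mul_le_of_norm_mul_one_add_sq_le {a b : ℂ} {s M : ℝ}
    (h : ‖a‖ * (1 + s ^ 2) ≤ M) : ‖a * b‖ ≤ M * ‖(1 + s ^ 2)⁻¹ • b‖ := by
  have hs : 0 < 1 + s ^ 2 := by positivity
  rw [norm_mul, norm_smul, Real.norm_of_nonneg (inv_nonneg.2 hs.le), ← mul_assoc]
  gcongr
  rwa [le_mul_inv_iff₀ hs]

lemma integrableOn_mul_of_norm_mul_one_add_sq_le {S : Set ℝ} (hS : MeasurableSet S)
    {f g : ℝ → ℂ} (hg : IntegrableOn (fun s => (1 + s ^ 2)⁻¹ • g s) S)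
    (hf : AEStronglyMeasurable f (volume.restrict S)) {M : ℝ}
    (hM : ∀ s ∈ S, ‖f s‖ * (1 + s ^ 2) ≤ M) : IntegrableOn (fun s => f s * g s) S := by
  have hg_meas : AEStronglyMeasurable g (volume.restrict S) := by
    have h := ((show Continuous (fun s : ℝ => 1 + s ^ 2) by fun_prop).aestronglyMeasurable
      (μ := volume.restrict S)).smul hg.aestronglyMeasurable
    refine h.congr (ae_of_all _ fun s => ?_)
    simp only [Pi.smul_apply']
    exact smul_inv_smul₀ (by positivity : (1 + s ^ 2 : ℝ) ≠ 0) (g s)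
  refine Integrable.mono' (hg.norm.const_mul M) (hf.mul hg_meas) ?_
  exact (ae_restrict_iff' hS).2 (ae_of_all _ fun s hs =>
    norm_mul_le_of_norm_mul_one_add_sq_le (hM s hs))

lemma integrable_inv_one_add_sq_smul_ofReal {μ : Measure ℝ} {g : ℝ → ℝ}
    (hg : Integrable (fun s => (1 + s ^ 2)⁻¹ * g s) μ) :
    Integrable (fun s => (1 + s ^ 2)⁻¹ • (g s : ℂ)) μ := by
  simpa [real_smul] using hg.ofReal (𝕜 := ℂ)

noncomputable def nevanlinnaIntegral (S : Set ℝ) (g : ℝ → ℂ) (z : ℂ) : ℂ :=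
  ∫ s in S, nevanlinnaKernel z s * g s

lemma integrableOn_nevanlinnaKernel_mul {S : Set ℝ} (hS : MeasurableSet S) {g : ℝ → ℂ}
    (hg : IntegrableOn (fun s => (1 + s ^ 2)⁻¹ • g s) S) {z : ℂ} {K : ℝ}
    (hK : ∀ s ∈ S, ‖z - I‖ ≤ K * ‖(s : ℂ) - z‖) :
    IntegrableOn (fun s => nevanlinnaKernel z s * g s) S :=
  integrableOn_mul_of_norm_mul_one_add_sq_le hS hg
    (measurable_nevanlinnaKernel z).aestronglyMeasurable
    fun s hs => norm_nevanlinnaKernel_mul_le (hK s hs)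

lemma integrable_nevanlinnaKernel_mul {g : ℝ → ℂ}
    (hg : Integrable (fun s => (1 + s ^ 2)⁻¹ • g s)) {z : ℂ} (hz : 0 < z.im) :
    Integrable (fun s => nevanlinnaKernel z s * g s) := by
  have hK : ∀ s ∈ (univ : Set ℝ), ‖z - I‖ ≤ ‖z - I‖ / z.im * ‖(s : ℂ) - z‖ := fun s _ => by
    have : z.im ≤ ‖(s : ℂ) - z‖ := by
      simpa [abs_of_pos hz] using abs_im_le_norm ((s : ℂ) - z)
    calc ‖z - I‖ = ‖z - I‖ / z.im * z.im := by field_simp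
      _ ≤ _ := by gcongr
  simpa using integrableOn_nevanlinnaKernel_mul MeasurableSet.univ hg.integrableOn hK

lemma exists_ball_norm_sub_I_le {S : Set ℝ} (hS : IsClosed S) {z₀ : ℂ}
    (hz₀ : z₀ ∉ ofReal '' S) :
    ∃ δ > 0, ∃ K : ℝ, ∀ z ∈ Metric.ball z₀ δ, ∀ s ∈ S, ‖z - I‖ ≤ K * ‖(s : ℂ) - z‖ := by
  have hT : IsClosed (ofReal '' S) := isometry_ofReal.isClosedEmbedding.isClosedMap S hS
  obtain ⟨ε, hε, hball⟩ := Metric.mem_nhds_iff.1 (hT.isOpen_compl.mem_nhds hz₀)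
  refine ⟨ε / 2, half_pos hε, (‖z₀ - I‖ + ε / 2) / (ε / 2), fun z hz s hs => ?_⟩
  rw [Metric.mem_ball, dist_eq_norm] at hz
  have hsz : ε / 2 ≤ ‖(s : ℂ) - z‖ := by
    have : ε ≤ ‖(s : ℂ) - z₀‖ := by
      by_contra! h
      exact hball (by rwa [Metric.mem_ball, dist_eq_norm]) (mem_image_of_mem _ hs)
    linarith [norm_sub_le_norm_sub_add_norm_sub (s : ℂ) z z₀]
  calc ‖z - I‖ ≤ ‖z₀ - I‖ + ε / 2 := by
        linarith [norm_sub_le_norm_sub_add_norm_sub z z₀ I]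
    _ = (‖z₀ - I‖ + ε / 2) / (ε / 2) * (ε / 2) := by field_simp
    _ ≤ _ := by gcongr

lemma differentiableAt_nevanlinnaIntegral {S : Set ℝ} (hS : IsClosed S) {g : ℝ → ℂ}
    (hg : IntegrableOn (fun s => (1 + s ^ 2)⁻¹ • g s) S) {z₀ : ℂ}
    (hz₀ : z₀ ∉ ofReal '' S) : DifferentiableAt ℂ (nevanlinnaIntegral S g) z₀ := by
  obtain ⟨δ, hδ, K, hK⟩ := exists_ball_norm_sub_I_le hS hz₀
  have hSm := hS.measurableSet
  have hball := Metric.ball_mem_nhds z₀ hδ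
  have hderiv_int : ∀ z ∈ Metric.ball z₀ δ,
      IntegrableOn (fun s : ℝ => (((s : ℂ) - z) ^ 2)⁻¹ * g s) S := fun z hz =>
    integrableOn_mul_of_norm_mul_one_add_sq_le hSm hg (by fun_prop)
      fun s hs => norm_inv_sq_mul_le (hK z hz s hs)
  refine (hasDerivAt_integral_of_dominated_loc_of_deriv_le (μ := volume.restrict S)
    (F' := fun z (s : ℝ) => (((s : ℂ) - z) ^ 2)⁻¹ * g s)
    (bound := fun s : ℝ => (1 + K) ^ 2 * ‖(1 + s ^ 2)⁻¹ • g s‖) hball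
    (eventually_of_mem hball fun z hz =>
      (integrableOn_nevanlinnaKernel_mul hSm hg (hK z hz)).aestronglyMeasurable)
    (integrableOn_nevanlinnaKernel_mul hSm hg (hK z₀ (Metric.mem_ball_self hδ)))
    (hderiv_int z₀ (Metric.mem_ball_self hδ)).aestronglyMeasurable ?_ (hg.norm.const_mul _)
    ?_).2.differentiableAt
  · exact (ae_restrict_iff' hSm).2 (ae_of_all _ fun s hs z hz =>
      norm_mul_le_of_norm_mul_one_add_sq_le (norm_inv_sq_mul_le (hK z hz s hs)))
  · refine (ae_restrict_iff' hSm).2 (ae_of_all _ fun s hs z hz => ?_)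
    exact (hasDerivAt_nevanlinnaKernel
      (sub_ne_zero.1 (norm_pos_iff.1 (norm_ofReal_sub_pos (hK z hz s hs))))).mul_const _

lemma analyticOnNhd_nevanlinnaIntegral {S : Set ℝ} (hS : IsClosed S) {g : ℝ → ℂ}
    (hg : IntegrableOn (fun s => (1 + s ^ 2)⁻¹ • g s) S) :
    AnalyticOnNhd ℂ (nevanlinnaIntegral S g) (ofReal '' S)ᶜ :=
  DifferentiableOn.analyticOnNhd
    (fun _ hz => (differentiableAt_nevanlinnaIntegral hS hg hz).differentiableWithinAt)
    (isometry_ofReal.isClosedEmbedding.isClosedMap S hS).isOpen_compl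

lemma nevanlinnaIntegral_conj (S : Set ℝ) (g : ℝ → ℝ) (z : ℂ) :
    nevanlinnaIntegral S (fun s => g s) (conj z) =
      conj (nevanlinnaIntegral S (fun s => g s) z) := by
  simp only [nevanlinnaIntegral, ← integral_conj, map_mul, conj_nevanlinnaKernel, conj_ofReal]

lemma im_nevanlinnaIntegral {S : Set ℝ} {g : ℝ → ℝ} {z : ℂ}
    (hint : IntegrableOn (fun s => nevanlinnaKernel z s * g s) S) :
    (nevanlinnaIntegral S (fun s => g s) z).im = ∫ s in S, halfPlanePoissonKernel z s * g s := by
  simp only [nevanlinnaIntegral, ← im_nevanlinnaKernel_mul_ofReal]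
  exact (integral_im hint).symm

noncomputable def jumpPotential (σ τ α β : ℝ) (g : ℝ → ℝ) (z : ℂ) : ℂ :=
  β * log (τ - z) - α * log (z - σ) + nevanlinnaIntegral (Ioo σ τ)ᶜ (fun s => g s) z

lemma sub_mem_slitPlane_of_notMem_image {σ τ : ℝ} {z : ℂ} (hz : z ∉ ofReal '' (Ioo σ τ)ᶜ) :
    z - σ ∈ slitPlane ∧ (τ : ℂ) - z ∈ slitPlane := by
  simp only [mem_slitPlane_iff, sub_re, sub_im, ofReal_re, ofReal_im, sub_zero, zero_sub,
    neg_ne_zero]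
  by_cases him : z.im = 0
  · have hre : z.re ∈ Ioo σ τ := by
      by_contra h
      exact hz ⟨z.re, h, Complex.ext (by simp) (by simp [him])⟩
    exact ⟨Or.inl (by linarith [hre.1]), Or.inl (by linarith [hre.2])⟩
  · exact ⟨Or.inr him, Or.inr him⟩

lemma analyticAt_jumpPotential {σ τ α β : ℝ} {g : ℝ → ℝ}
    (hg : IntegrableOn (fun s => (1 + s ^ 2)⁻¹ * g s) (Ioo σ τ)ᶜ) {z : ℂ}
    (hz : z ∉ ofReal '' (Ioo σ τ)ᶜ) : AnalyticAt ℂ (jumpPotential σ τ α β g) z := by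
  obtain ⟨hzσ, hτz⟩ := sub_mem_slitPlane_of_notMem_image hz
  exact ((analyticAt_const.mul ((analyticAt_const.sub analyticAt_id).clog hτz)).sub
    (analyticAt_const.mul ((analyticAt_id.sub analyticAt_const).clog hzσ))).add
    (analyticOnNhd_nevanlinnaIntegral isOpen_Ioo.isClosed_compl
      (integrable_inv_one_add_sq_smul_ofReal hg) z hz)

lemma jumpPotential_conj {σ τ α β : ℝ} {g : ℝ → ℝ} {z : ℂ} (hz : z ∉ ofReal '' (Ioo σ τ)ᶜ) :
    jumpPotential σ τ α β g (conj z) = conj (jumpPotential σ τ α β g z) := by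
  obtain ⟨hzσ, hτz⟩ := sub_mem_slitPlane_of_notMem_image hz
  have hconj_zσ : conj z - σ = conj (z - σ) := by simp
  have hconj_τz : τ - conj z = conj (τ - z) := by simp
  rw [jumpPotential, jumpPotential, nevanlinnaIntegral_conj, hconj_zσ, hconj_τz,
    log_conj _ (mem_slitPlane_iff_arg.1 hzσ).1, log_conj _ (mem_slitPlane_iff_arg.1 hτz).1]
  simp only [map_add, map_sub, map_mul, conj_ofReal]

lemma poisson_eq_jumpPotential {σ τ α β : ℝ} (hσ : σ < 0) (hτ : 0 < τ) {g : ℝ → ℝ}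
    (hg : Integrable (fun s => (1 + s ^ 2)⁻¹ * g s))
    (hα : ∀ᵐ s ∂(volume.restrict (Ioo σ 0)), g s = α)
    (hβ : ∀ᵐ s ∂(volume.restrict (Ioo 0 τ)), g s = β) {z : ℂ} (hz : 0 < z.im) :
    poisson g z = β + ((α - β) * arg z + (jumpPotential σ τ α β g z).im) / π := by
  have hint := integrable_nevanlinnaKernel_mul (integrable_inv_one_add_sq_smul_ofReal hg) hz
  have hint_re : Integrable (fun s => halfPlanePoissonKernel z s * g s) := by
    simpa only [RCLike.im_to_complex, im_nevanlinnaKernel_mul_ofReal] using hint.im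
  have hsplit : ∫ s in Ioo σ τ, halfPlanePoissonKernel z s * g s =
      α * (arg z - arg (z - σ)) + β * (arg (z - τ) - arg z) := by
    rw [← Ioc_union_Ioo_eq_Ioo hσ.le hτ,
      setIntegral_union (Ioc_disjoint_Ioi_same.mono_right Ioo_subset_Ioi_self) measurableSet_Ioo
        hint_re.integrableOn hint_re.integrableOn, integral_Ioc_eq_integral_Ioo,
      setIntegral_halfPlanePoissonKernel_mul_of_ae_eq hz hσ.le hα,
      setIntegral_halfPlanePoissonKernel_mul_of_ae_eq hz hτ.le hβ]
    simp
  have harg : arg (z - τ) = arg (τ - z) + π := by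
    rw [← neg_sub, arg_neg_eq_arg_add_pi_of_im_neg (by simpa using hz)]
  rw [poisson_eq, ← integral_add_compl measurableSet_Ioo hint_re, hsplit,
    ← im_nevanlinnaIntegral hint.integrableOn, harg, jumpPotential]
  simp only [add_im, sub_im, im_ofReal_mul, log_im]
  field_simp
  ring

noncomputable def lightlikeExtension (σ τ α β : ℝ) (g : ℝ → ℝ) (p : ℝ × ℝ) : ℝ :=
  β + (p.2 * (α - β) + (jumpPotential σ τ α β g (p.1 * exp (p.2 * I))).im) / π

lemma im_ofReal_mul_exp_mul_I (r θ : ℝ) : ((r : ℂ) * exp (θ * I)).im = r * Real.sin θ := by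
  rw [im_ofReal_mul, exp_ofReal_mul_I_im]

lemma ofReal_mul_exp_mul_I_notMem_image {σ τ : ℝ} (hσ : σ < 0) (hτ : 0 < τ) (r : ℝ) {θ : ℝ}
    (hθ : θ ∈ Ioo 0 π) : (r : ℂ) * exp (θ * I) ∉ ofReal '' (Ioo σ τ)ᶜ := by
  rintro ⟨s, hs, hse⟩
  have hr : r = 0 := by
    have h := congrArg im hse
    rw [ofReal_im, im_ofReal_mul_exp_mul_I, eq_comm] at h
    exact (mul_eq_zero.1 h).resolve_right (Real.sin_pos_of_pos_of_lt_pi hθ.1 hθ.2).ne'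
  rw [hr, ofReal_zero, zero_mul, ofReal_eq_zero] at hse
  exact hs (hse ▸ ⟨hσ, hτ⟩)

lemma analyticOnNhd_lightlikeExtension {σ τ α β : ℝ} (hσ : σ < 0) (hτ : 0 < τ) {g : ℝ → ℝ}
    (hg : IntegrableOn (fun s => (1 + s ^ 2)⁻¹ * g s) (Ioo σ τ)ᶜ) :
    AnalyticOnNhd ℝ (lightlikeExtension σ τ α β g) (univ ×ˢ Ioo 0 π) := by
  rintro ⟨r, θ⟩ ⟨-, hθ⟩
  have hofReal {f : ℝ × ℝ → ℝ} (hf : AnalyticAt ℝ f (r, θ)) :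
      AnalyticAt ℝ (fun p => (f p : ℂ)) (r, θ) :=
    (ofRealCLM.analyticAt _).comp hf
  have hpolar : AnalyticAt ℝ (fun p : ℝ × ℝ => (p.1 : ℂ) * exp (p.2 * I)) (r, θ) :=
    (hofReal analyticAt_fst).mul
      ((analyticAt_cexp.restrictScalars (𝕜 := ℝ)).comp
        ((hofReal analyticAt_snd).mul analyticAt_const))
  have hΨ := (imCLM.analyticAt _).comp <| ((analyticAt_jumpPotential (α := α) (β := β) hg
    (ofReal_mul_exp_mul_I_notMem_image hσ hτ r hθ)).restrictScalars (𝕜 := ℝ)).comp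
      (f := fun p : ℝ × ℝ => (p.1 : ℂ) * exp (p.2 * I)) hpolar
  exact analyticAt_const.add (((analyticAt_snd.mul analyticAt_const).add hΨ).div_const)

lemma lightlikeExtension_eq_poisson {σ τ α β : ℝ} (hσ : σ < 0) (hτ : 0 < τ) {g : ℝ → ℝ}
    (hg : Integrable (fun s => (1 + s ^ 2)⁻¹ * g s))
    (hα : ∀ᵐ s ∂(volume.restrict (Ioo σ 0)), g s = α)
    (hβ : ∀ᵐ s ∂(volume.restrict (Ioo 0 τ)), g s = β) {r θ : ℝ} (hr : 0 < r)
    (hθ : θ ∈ Ioo 0 π) :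
    lightlikeExtension σ τ α β g (r, θ) = poisson g (r * exp (θ * I)) := by
  have him : 0 < ((r : ℂ) * exp (θ * I)).im := by
    rw [im_ofReal_mul_exp_mul_I]
    exact mul_pos hr (Real.sin_pos_of_pos_of_lt_pi hθ.1 hθ.2)
  have harg : arg (r * exp (θ * I)) = θ := by
    rw [arg_real_mul _ hr, exp_mul_I,
      arg_cos_add_sin_mul_I ⟨by linarith [hθ.1, Real.pi_pos], hθ.2.le⟩]
  rw [poisson_eq_jumpPotential hσ hτ hg hα hβ him, harg, lightlikeExtension, mul_comm]

lemma ofReal_neg_mul_exp_pi_sub_mul_I (r θ : ℝ) :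
    ((-r : ℝ) : ℂ) * exp ((π - θ : ℝ) * I) = conj (r * exp (θ * I)) := by
  rw [map_mul, conj_ofReal, ← exp_conj, map_mul, conj_ofReal, conj_I]
  push_cast
  rw [show ((π : ℂ) - θ) * I = π * I + θ * -I by ring, exp_add, exp_pi_mul_I]
  ring

lemma lightlikeExtension_neg_add {σ τ α β : ℝ} (hσ : σ < 0) (hτ : 0 < τ) (g : ℝ → ℝ) (r : ℝ)
    {θ : ℝ} (hθ : θ ∈ Ioo 0 π) :
    lightlikeExtension σ τ α β g (-r, π - θ) + lightlikeExtension σ τ α β g (r, θ) = α + β := by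
  simp only [lightlikeExtension]
  rw [ofReal_neg_mul_exp_pi_sub_mul_I,
    jumpPotential_conj (ofReal_mul_exp_mul_I_notMem_image hσ hτ r hθ), conj_im]
  field_simp
  ring

lemma lightlikeExtension_zero {σ τ α β : ℝ} (hσ : σ < 0) (hτ : 0 < τ) (g : ℝ → ℝ) (θ : ℝ) :
    lightlikeExtension σ τ α β g (0, θ) = θ / π * α + (1 - θ / π) * β := by
  have h0 : (0 : ℂ) ∉ ofReal '' (Ioo σ τ)ᶜ := by
    rintro ⟨s, hs, hs0⟩
    exact hs (ofReal_eq_zero.1 hs0 ▸ ⟨hσ, hτ⟩)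
  have hreal : (jumpPotential σ τ α β g 0).im = 0 := by
    have h := jumpPotential_conj (α := α) (β := β) (g := g) h0
    rw [map_zero] at h
    exact conj_eq_iff_im.1 h.symm
  simp only [lightlikeExtension, ofReal_zero, zero_mul, hreal]
  field_simp
  ring

/-- Reflection principle for lightlike lines (analytic form): a bounded measurable
boundary map which is constantly `a` on `(σ, 0)` and constantly `b` on `(0, τ)`
produces a Poisson integral that extends real analytically across the jump point,
with point symmetry about the midpoint `(a+b)/2`. -/
theorem reflection_principle_lightlike (σ τ : ℝ) (hσ : σ < 0) (hτ : 0 < τ)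
    (a b : Fin 3 → ℝ) (X : ℝ → Fin 3 → ℝ)
    (hXmeas : Measurable X) (hXbdd : ∃ C : ℝ, ∀ s : ℝ, ‖X s‖ ≤ C)
    (hXa : ∀ᵐ s ∂(MeasureTheory.volume.restrict (Set.Ioo σ 0)), X s = a)
    (hXb : ∀ᵐ s ∂(MeasureTheory.volume.restrict (Set.Ioo 0 τ)), X s = b) :
    ∃ F : ℝ × ℝ → Fin 3 → ℝ,
      AnalyticOnNhd ℝ F (Set.univ ×ˢ Set.Ioo 0 Real.pi) ∧
      (∀ r : ℝ, 0 < r → ∀ θ ∈ Set.Ioo 0 Real.pi,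
        F (r, θ) =
          fun i => poisson (fun s => X s i) ((r : ℂ) * Complex.exp (θ * Complex.I))) ∧
      (∀ r : ℝ, ∀ θ ∈ Set.Ioo 0 Real.pi,
        F (-r, Real.pi - θ) + F (r, θ) = a + b) ∧
      (∀ θ ∈ Set.Ioo 0 Real.pi,
        F (0, θ) = (θ / Real.pi) • a + (1 - θ / Real.pi) • b) := by
  obtain ⟨C, hC⟩ := hXbdd
  have hg (i : Fin 3) : Integrable (fun s => (1 + s ^ 2)⁻¹ * X s i) :=
    integrable_inv_one_add_sq.mul_bdd ((measurable_pi_apply i).comp hXmeas).aestronglyMeasurable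
      (ae_of_all _ fun s => (norm_le_pi_norm (X s) i).trans (hC s))
  refine ⟨fun p i => lightlikeExtension σ τ (a i) (b i) (fun s => X s i) p, ?_, ?_, ?_, ?_⟩
  · exact fun p hp => AnalyticAt.pi fun i =>
      analyticOnNhd_lightlikeExtension hσ hτ (hg i).integrableOn p hp
  · intro r hr θ hθ
    funext i
    exact lightlikeExtension_eq_poisson hσ hτ (hg i) (hXa.mono fun s hs => congrFun hs i)
      (hXb.mono fun s hs => congrFun hs i) hr hθ
  · intro r θ hθ
    funext i
    exact lightlikeExtension_neg_add hσ hτ _ r hθ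
  · intro θ _
    funext i
    exact lightlikeExtension_zero hσ hτ _ θ
end

section
/- Define ψ₃ : (0,π) × (0,π) → ℝ by ψ₃(x,y) = arccos(cos x · cos y). Then on (0,π) × (0,π): (i) ψ₃ is spacelike, i.e. (∂ψ₃/∂x)² + (∂ψ₃/∂y)² < 1; (ii) ψ₃ satisfies the maximal surface equation (1 − ψ_y²)ψ_xx + 2ψ_xψ_yψ_xy + (1 − ψ_x²)ψ_yy = 0; (iii) the graph of ψ₃ lies on the spacelike Scherk surface 𝒮₃, i.e. cos(ψ₃(x,y)) − cos x·cos y = 0. -/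
/-- Partial derivative in the first variable. -/
noncomputable def px (ψ : ℝ → ℝ → ℝ) (x y : ℝ) : ℝ := deriv (fun x' => ψ x' y) x

/-- Partial derivative in the second variable. -/
noncomputable def py (ψ : ℝ → ℝ → ℝ) (x y : ℝ) : ℝ := deriv (fun y' => ψ x y') y

/-- The graphing function of one sheet of the spacelike Scherk surface
`𝒮₃ = {cos t - cos x cos y = 0}`. -/
noncomputable def ψ₃ (x y : ℝ) : ℝ := Real.arccos (Real.cos x * Real.cos y)

/-!
With `u = cos x cos y` we have `ψ₃ = arccos u`, so the chain rule gives
`ψ_x = sin x cos y / √(1 - u²)` and `ψ_y = cos x sin y / √(1 - u²)`, and the second derivatives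
`ψ_xx`, `ψ_xy`, `ψ_yy` are `cos x cos y sin² y`, `-sin x sin y`, `cos x cos y sin² x`
over `(1 - u²)^(3/2)`. Hence `1 - ψ_x² - ψ_y² = sin² x sin² y / (1 - u²) > 0` on the open square,
and the maximal surface equation becomes a polynomial identity modulo `sin² + cos² = 1`.
The `y`-derivatives are obtained from the `x`-ones through the symmetry `ψ₃ x y = ψ₃ y x`.
-/

open Real

theorem HasDerivAt.arccos {f : ℝ → ℝ} {f' x : ℝ} (hf : HasDerivAt f f' x) (h : f x ^ 2 < 1) :
    HasDerivAt (fun t => arccos (f t)) (-f' / √(1 - f x ^ 2)) x := by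
  have habs : |f x| < 1 := (sq_lt_one_iff_abs_lt_one _).mp h
  have key := (hasDerivAt_arccos (abs_lt.mp habs).1.ne' (abs_lt.mp habs).2.ne).comp x hf
  exact key.congr_deriv (by ring)

theorem HasDerivAt.div_sqrt_one_sub_sq {f g : ℝ → ℝ} {f' g' x : ℝ} (hf : HasDerivAt f f' x)
    (hg : HasDerivAt g g' x) (h : g x ^ 2 < 1) :
    HasDerivAt (fun t => f t / √(1 - g t ^ 2))
      ((f' * (1 - g x ^ 2) + f x * g x * g') / √(1 - g x ^ 2) ^ 3) x := by
  have hq : 0 < 1 - g x ^ 2 := by linarith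
  have hs : 0 < √(1 - g x ^ 2) := sqrt_pos.mpr hq
  have hs2 : √(1 - g x ^ 2) ^ 2 = 1 - g x ^ 2 := sq_sqrt hq.le
  refine (hf.div (((hg.fun_pow 2).const_sub 1).sqrt hq.ne') hs.ne').congr_deriv ?_
  field_simp
  rw [hs2]
  ring

theorem one_sub_sq_cos_mul_cos (x y : ℝ) :
    1 - (cos x * cos y) ^ 2 = sin x ^ 2 + cos x ^ 2 * sin y ^ 2 := by
  linear_combination -sin_sq_add_cos_sq x - cos x ^ 2 * sin_sq_add_cos_sq y

theorem sq_cos_mul_cos_lt_one {x : ℝ} (hx : sin x ≠ 0) (y : ℝ) : (cos x * cos y) ^ 2 < 1 := by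
  have : 0 < sin x ^ 2 + cos x ^ 2 * sin y ^ 2 := by positivity
  linarith [one_sub_sq_cos_mul_cos x y]

theorem cos_ψ₃ (x y : ℝ) : cos (ψ₃ x y) = cos x * cos y := by
  have h : |cos x * cos y| ≤ 1 := by
    rw [abs_mul]; exact mul_le_one₀ (abs_cos_le_one x) (abs_nonneg _) (abs_cos_le_one y)
  exact cos_arccos (abs_le.mp h).1 (abs_le.mp h).2

theorem ψ₃_comm (x y : ℝ) : ψ₃ x y = ψ₃ y x := by rw [ψ₃, ψ₃, mul_comm]

theorem py_eq_px_of_symm {ψ : ℝ → ℝ → ℝ} (h : ∀ x y, ψ x y = ψ y x) (x y : ℝ) :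
    py ψ x y = px ψ y x := by
  simp only [px, py, h x]

theorem py_py_eq_px_px_of_symm {ψ : ℝ → ℝ → ℝ} (h : ∀ x y, ψ x y = ψ y x) (x y : ℝ) :
    py (py ψ) x y = px (px ψ) y x := by
  rw [py]
  simp only [py_eq_px_of_symm h]
  rfl

theorem hasDerivAt_ψ₃_left {x y : ℝ} (h : (cos x * cos y) ^ 2 < 1) :
    HasDerivAt (fun x' => ψ₃ x' y) (sin x * cos y / √(1 - (cos x * cos y) ^ 2)) x :=
  (((hasDerivAt_cos x).mul_const (cos y)).arccos h).congr_deriv (by ring)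

theorem px_ψ₃ {x y : ℝ} (h : (cos x * cos y) ^ 2 < 1) :
    px ψ₃ x y = sin x * cos y / √(1 - (cos x * cos y) ^ 2) :=
  (hasDerivAt_ψ₃_left h).deriv

theorem py_ψ₃ {x y : ℝ} (h : (cos x * cos y) ^ 2 < 1) :
    py ψ₃ x y = cos x * sin y / √(1 - (cos x * cos y) ^ 2) := by
  rw [py_eq_px_of_symm ψ₃_comm, px_ψ₃ (by rwa [mul_comm]), mul_comm (cos y), mul_comm (sin y)]

theorem px_px_ψ₃ {y : ℝ} (hy : sin y ≠ 0) (x : ℝ) :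
    px (px ψ₃) x y = cos x * cos y * sin y ^ 2 / √(1 - (cos x * cos y) ^ 2) ^ 3 := by
  have hlt (x' : ℝ) : (cos x' * cos y) ^ 2 < 1 := by
    rw [mul_comm]; exact sq_cos_mul_cos_lt_one hy x'
  have hd := ((hasDerivAt_sin x).mul_const (cos y)).div_sqrt_one_sub_sq
    ((hasDerivAt_cos x).mul_const (cos y)) (hlt x)
  rw [px, funext fun x' => px_ψ₃ (hlt x'), hd.deriv]
  congr 1
  linear_combination
    -(cos x * cos y) * sin_sq_add_cos_sq y - cos x * cos y ^ 3 * sin_sq_add_cos_sq x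

theorem py_px_ψ₃ {x : ℝ} (hx : sin x ≠ 0) (y : ℝ) :
    py (px ψ₃) x y = -(sin x * sin y) / √(1 - (cos x * cos y) ^ 2) ^ 3 := by
  have hd := ((hasDerivAt_cos y).const_mul (sin x)).div_sqrt_one_sub_sq
    ((hasDerivAt_cos y).const_mul (cos x)) (sq_cos_mul_cos_lt_one hx y)
  rw [py, funext fun y' => px_ψ₃ (sq_cos_mul_cos_lt_one hx y'), hd.deriv]
  congr 1
  ring

theorem py_py_ψ₃ {x : ℝ} (hx : sin x ≠ 0) (y : ℝ) :
    py (py ψ₃) x y = cos x * cos y * sin x ^ 2 / √(1 - (cos x * cos y) ^ 2) ^ 3 := by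
  rw [py_py_eq_px_px_of_symm ψ₃_comm, px_px_ψ₃ hx, mul_comm (cos y)]

theorem one_sub_px_sq_sub_py_sq_ψ₃ {x y : ℝ} (h : (cos x * cos y) ^ 2 < 1) :
    1 - px ψ₃ x y ^ 2 - py ψ₃ x y ^ 2 = (sin x * sin y) ^ 2 / (1 - (cos x * cos y) ^ 2) := by
  rw [px_ψ₃ h, py_ψ₃ h, div_pow, div_pow, sq_sqrt (by linarith)]
  set q := 1 - (cos x * cos y) ^ 2 with hq
  have hq0 : q ≠ 0 := by linarith
  field_simp
  linear_combination hq - (sin y ^ 2 + cos y ^ 2) * sin_sq_add_cos_sq x - sin_sq_add_cos_sq y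

theorem maximal_surface_eq_ψ₃ {x y : ℝ} (hx : sin x ≠ 0) (hy : sin y ≠ 0) :
    (1 - py ψ₃ x y ^ 2) * px (px ψ₃) x y + 2 * px ψ₃ x y * py ψ₃ x y * py (px ψ₃) x y
      + (1 - px ψ₃ x y ^ 2) * py (py ψ₃) x y = 0 := by
  have h := sq_cos_mul_cos_lt_one hx y
  rw [px_ψ₃ h, py_ψ₃ h, px_px_ψ₃ hy, py_px_ψ₃ hx, py_py_ψ₃ hx]
  have hq : 0 < 1 - (cos x * cos y) ^ 2 := by linarith
  have hs2 : √(1 - (cos x * cos y) ^ 2) ^ 2 = 1 - (cos x * cos y) ^ 2 := sq_sqrt hq.le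
  set s := √(1 - (cos x * cos y) ^ 2)
  have hs : s ≠ 0 := (sqrt_pos.mpr hq).ne'
  field_simp
  linear_combination cos x * cos y * ((sin x ^ 2 + sin y ^ 2) * hs2
    - (sin y ^ 2 + sin x ^ 2 * cos y ^ 2) * sin_sq_add_cos_sq x
    - (sin x ^ 2 + sin y ^ 2 * cos x ^ 2) * sin_sq_add_cos_sq y)

/-- On `(0, π) × (0, π)`, the function `ψ₃` is spacelike, satisfies the maximal
surface equation, and its graph lies on the spacelike Scherk surface `𝒮₃`. -/
theorem ψ₃_maximal_graph :
    ∀ x ∈ Set.Ioo (0 : ℝ) Real.pi, ∀ y ∈ Set.Ioo (0 : ℝ) Real.pi,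
      (px ψ₃ x y) ^ 2 + (py ψ₃ x y) ^ 2 < 1 ∧
      (1 - (py ψ₃ x y) ^ 2) * px (px ψ₃) x y
        + 2 * px ψ₃ x y * py ψ₃ x y * py (px ψ₃) x y
        + (1 - (px ψ₃ x y) ^ 2) * py (py ψ₃) x y = 0 ∧
      Real.cos (ψ₃ x y) - Real.cos x * Real.cos y = 0 := by
  intro x hx y hy
  have hsx : 0 < sin x := sin_pos_of_pos_of_lt_pi hx.1 hx.2
  have hsy : 0 < sin y := sin_pos_of_pos_of_lt_pi hy.1 hy.2
  refine ⟨?_, maximal_surface_eq_ψ₃ hsx.ne' hsy.ne', sub_eq_zero.mpr (cos_ψ₃ x y)⟩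
  have h := sq_cos_mul_cos_lt_one hsx.ne' y
  have hgap : 0 < (sin x * sin y) ^ 2 / (1 - (cos x * cos y) ^ 2) :=
    div_pos (by positivity) (by linarith)
  linarith [one_sub_px_sq_sub_py_sq_ψ₃ h]
end
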